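/- Let H be the block matrix [[D+P, 0, 0], [0, (ρ/α)B'B, ((1-α)/α)B'], [0, ((1-α)/α)B, (1/(αρ))I]] where D and P are positive semi-definite matrices, B is any real matrix, ρ > 0, and 0 < α < 2. Then H is positive semi-definite. -/

import Mathlib

/-!
Writing `v = B u` and `c = 1 - α`, the `(u, μ)`-part of the form is
`α⁻¹ (ρ ‖v‖² + 2c ⟪v, μ⟫ + ρ⁻¹ ‖μ‖²)`. Since `|c| ≤ 1`, the bracket is the convex combination with
weights `(1 + c)/2` and `(1 - c)/2` of `ρ ‖v + ρ⁻¹ μ‖²` and `ρ ‖v - ρ⁻¹ μ‖²`, hence a sum of squares.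
-/

open Matrix

section ScaledQuadraticForm

variable {ι : Type*} [Fintype ι]

lemma dotProduct_self_nonneg_real (v : ι → ℝ) : 0 ≤ v ⬝ᵥ v := by
  simpa only [star_trivial] using dotProduct_self_star_nonneg v

lemma scaled_quadratic_form_eq_sum_sq (v μ : ι → ℝ) {ρ α : ℝ} (hρ : ρ ≠ 0) (hα : α ≠ 0) :
    (ρ / α) * (v ⬝ᵥ v) + (2 * (1 - α) / α) * (v ⬝ᵥ μ) + (1 / (α * ρ)) * (μ ⬝ᵥ μ)
      = (2 - α) * ρ / (2 * α) * ((v + ρ⁻¹ • μ) ⬝ᵥ (v + ρ⁻¹ • μ))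
        + ρ / 2 * ((v - ρ⁻¹ • μ) ⬝ᵥ (v - ρ⁻¹ • μ)) := by
  simp only [add_dotProduct, dotProduct_add, sub_dotProduct, dotProduct_sub, smul_dotProduct,
    dotProduct_smul, smul_eq_mul, dotProduct_comm μ v]
  field_simp
  ring

lemma scaled_quadratic_form_nonneg (v μ : ι → ℝ) {ρ α : ℝ} (hρ : 0 < ρ) (hα₀ : 0 < α)
    (hα₂ : α < 2) :
    0 ≤ (ρ / α) * (v ⬝ᵥ v) + (2 * (1 - α) / α) * (v ⬝ᵥ μ) + (1 / (α * ρ)) * (μ ⬝ᵥ μ) := by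
  rw [scaled_quadratic_form_eq_sum_sq v μ hρ.ne' hα₀.ne']
  have hα₂' : 0 < 2 - α := sub_pos.mpr hα₂
  have := dotProduct_self_nonneg_real (v + ρ⁻¹ • μ)
  have := dotProduct_self_nonneg_real (v - ρ⁻¹ • μ)
  positivity

end ScaledQuadraticForm

/-- The quadratic form of the block matrix H = [[D+P,0,0],[0,(ρ/α)B'B,((1-α)/α)B'],
[0,((1-α)/α)B,(1/(αρ))I]] is nonnegative, i.e. H is positive semi-definite. -/
theorem stmt_0 {n p m : ℕ}
    (D P : Matrix (Fin n) (Fin n) ℝ) (hD : D.PosSemidef) (hP : P.PosSemidef)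
    (B : Matrix (Fin m) (Fin p) ℝ) (ρ α : ℝ) (hρ : 0 < ρ) (hα1 : 0 < α) (hα2 : α < 2)
    (x : Fin n → ℝ) (u : Fin p → ℝ) (μ : Fin m → ℝ) :
    0 ≤ x ⬝ᵥ (D + P).mulVec x
      + (ρ / α) * (B.mulVec u ⬝ᵥ B.mulVec u)
      + (2 * (1 - α) / α) * (B.mulVec u ⬝ᵥ μ)
      + (1 / (α * ρ)) * (μ ⬝ᵥ μ) := by
  have hx : 0 ≤ x ⬝ᵥ (D + P).mulVec x := by
    simpa only [star_trivial] using (hD.add hP).dotProduct_mulVec_nonneg x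
  have huμ := scaled_quadratic_form_nonneg (B.mulVec u) μ hρ hα1 hα2
  linarith
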